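/- arXiv:2406.15745 — 2 statements merged into one kernel-verified Lean document; each statement's English description precedes it below -/
import Mathlib

section
/- Let R be a ring with proper involution, m a positive integer, let x be an m-weak group inverse of a ∈ R and let y be an m-weak group inverse of b ∈ R. If a b = 0, b a = 0 and a^* b = 0, then a + b has an m-weak group inverse, and x + y is an m-weak group inverse of a + b. -/
/-! If `z` is an `m`-weak group inverse of `a` with `m ≥ 1`, then `z` annihilates whatever `a`
annihilates: for `a c = 0`, the element `u = a^(m+1) z c` lies in `a^k R` and
`(a^k)^* u = (a^k)^* a^m c = 0`, so `u^* u = 0` and `u = 0` by properness; since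
`z = z^(m+1) a^(m+1) z`, this gives `z c = z^(m+1) u = 0`. Hence `x b = 0` and `y a = 0`, and with
`a b = b a = 0` and `a^* b = 0` every cross term in the defining identities for `a + b` and `x + y`
vanishes, once a common exponent `k ≥ 1` is chosen (the conditions persist as `k` grows). -/

/-- `z` is an `m`-weak group inverse of `a`. -/
def IsMWGI {R : Type*} [Ring R] [StarRing R] (m : ℕ) (a z : R) : Prop :=
  a * z ^ 2 = z ∧ ∃ k : ℕ, z * a ^ (k + 1) = a ^ k ∧
    star (a ^ k) * a ^ (m + 1) * z = star (a ^ k) * a ^ m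

/-- `w` is a weak group inverse of `b`. -/
def IsWGI {R : Type*} [Ring R] [StarRing R] (b w : R) : Prop :=
  b * w ^ 2 = w ∧ star (star b * b ^ 2 * w) = star b * b ^ 2 * w ∧
    ∃ k : ℕ, b ^ k = w * b ^ (k + 1)

/-- `x` is a group inverse of `u`. -/
def IsGroupInv {R : Type*} [Ring R] (u x : R) : Prop :=
  u * x ^ 2 = x ∧ u * x = x * u ∧ u = u ^ 2 * x

/-- `d` is a Drazin inverse of `a`. -/
def IsDrazin {R : Type*} [Ring R] (a d : R) : Prop :=
  a * d ^ 2 = d ∧ a * d = d * a ∧ ∃ k : ℕ, a ^ k = d * a ^ (k + 1)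

/-- `y` is a core-EP inverse of `a`. -/
def IsCoreEP {R : Type*} [Ring R] [StarRing R] (a y : R) : Prop :=
  a * y ^ 2 = y ∧ star (a * y) = a * y ∧ ∃ k : ℕ, a ^ k = y * a ^ (k + 1)

section Monoid

variable {M : Type*} [Monoid M] {a z : M} {k : ℕ}

theorem pow_mul_pow_succ_of_mul_sq (h : a * z ^ 2 = z) (j : ℕ) : a ^ j * z ^ (j + 1) = z := by
  induction j with
  | zero => simp
  | succ j ih =>
    calc a ^ (j + 1) * z ^ (j + 1 + 1) = a ^ j * ((a * z ^ 2) * z ^ j) := by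
          rw [pow_succ, mul_assoc, mul_assoc, ← pow_add, add_comm 2 j]
      _ = z := by rw [h, ← pow_succ', ih]

theorem pow_mul_pow_add_of_mul_pow_succ (h : z * a ^ (k + 1) = a ^ k) (j : ℕ) :
    z ^ j * a ^ (k + j) = a ^ k := by
  induction j with
  | zero => simp
  | succ j ih =>
    calc z ^ (j + 1) * a ^ (k + (j + 1)) = z ^ j * (z * a ^ (k + 1)) * a ^ j := by
          rw [← add_assoc, add_right_comm, pow_add a (k + 1), pow_succ, mul_assoc, mul_assoc,
            mul_assoc]
      _ = a ^ k := by rw [h, mul_assoc, ← pow_add, ih]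

theorem pow_mul_pow_mul_self_of_mul_sq (h₁ : a * z ^ 2 = z) (h₂ : z * a ^ (k + 1) = a ^ k)
    (j : ℕ) : z ^ j * a ^ j * z = z :=
  calc z ^ j * a ^ j * z = z ^ j * a ^ (k + j) * z ^ (k + 1) := by
        nth_rw 2 [← pow_mul_pow_succ_of_mul_sq h₁ k]
        rw [mul_assoc, ← mul_assoc (a ^ j), ← pow_add, add_comm j, ← mul_assoc]
    _ = z := by rw [pow_mul_pow_add_of_mul_pow_succ h₂, pow_mul_pow_succ_of_mul_sq h₁]

end Monoid

theorem mul_eq_zero_of_star_mul_mul_eq_zero {R : Type*} [SemigroupWithZero R] [StarMul R]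
    (hproper : ∀ x : R, star x * x = 0 → x = 0) {q v : R} (h : star q * (q * v) = 0) :
    q * v = 0 :=
  hproper _ (by rw [star_mul, mul_assoc, h, mul_zero])

theorem mul_pow_eq_zero_of_mul_eq_zero {M₀ : Type*} [MonoidWithZero M₀] {a b : M₀} {n : ℕ}
    (h : a * b = 0) (hn : n ≠ 0) : a * b ^ n = 0 := by
  obtain ⟨n, rfl⟩ := Nat.exists_eq_succ_of_ne_zero hn
  rw [pow_succ', ← mul_assoc, h, zero_mul]

theorem pow_mul_eq_zero_of_mul_eq_zero {M₀ : Type*} [MonoidWithZero M₀] {a b : M₀} {n : ℕ}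
    (h : a * b = 0) (hn : n ≠ 0) : a ^ n * b = 0 :=
  pow_mul_eq_zero_of_le (Nat.one_le_iff_ne_zero.2 hn) (by rwa [pow_one])

theorem add_pow_of_mul_eq_zero {R : Type*} [Semiring R] {a b : R} (hab : a * b = 0)
    (hba : b * a = 0) {n : ℕ} (hn : n ≠ 0) : (a + b) ^ n = a ^ n + b ^ n := by
  induction n, Nat.one_le_iff_ne_zero.2 hn using Nat.le_induction with
  | base => simp
  | succ n hn ih =>
    rw [pow_succ, ih (by omega), add_mul, mul_add, mul_add,
      pow_mul_eq_zero_of_mul_eq_zero hab (by omega), pow_mul_eq_zero_of_mul_eq_zero hba (by omega),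
      ← pow_succ, ← pow_succ, add_zero, zero_add]

theorem star_pow_mul_pow_eq_zero {M₀ : Type*} [MonoidWithZero M₀] [StarMul M₀] {a b : M₀}
    (h : star a * b = 0) {k n : ℕ} (hk : k ≠ 0) (hn : n ≠ 0) : star (a ^ k) * b ^ n = 0 := by
  rw [star_pow]
  exact mul_pow_eq_zero_of_mul_eq_zero (pow_mul_eq_zero_of_mul_eq_zero h hk) hn

theorem add_mul_add_sq_of_mul_eq_zero {R : Type*} [Semiring R] {a b x y : R}
    (hx : a * x ^ 2 = x) (hy : b * y ^ 2 = y) (hxb : x * b = 0) (hya : y * a = 0)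
    (hay : a * y = 0) (hbx : b * x = 0) : (a + b) * (x + y) ^ 2 = x + y := by
  have hxy : x * y = 0 := by rw [← hy, ← mul_assoc, hxb, zero_mul]
  have hyx : y * x = 0 := by rw [← hx, ← mul_assoc, hya, zero_mul]
  rw [sq] at hx hy
  simp only [sq, add_mul, mul_add, ← mul_assoc, hxy, hyx, hay, hbx, add_zero, zero_add]
  rw [mul_assoc, mul_assoc b, hx, hy]

section MWGI

variable {R : Type*} [Ring R] [StarRing R] {m k l : ℕ} {a b c x y z : R}

def IsMWGIIndex (m : ℕ) (a z : R) (k : ℕ) : Prop :=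
  z * a ^ (k + 1) = a ^ k ∧ star (a ^ k) * a ^ (m + 1) * z = star (a ^ k) * a ^ m

theorem isMWGI_iff_exists_isMWGIIndex :
    IsMWGI m a z ↔ a * z ^ 2 = z ∧ ∃ k, IsMWGIIndex m a z k :=
  Iff.rfl

theorem IsMWGIIndex.mono (h : IsMWGIIndex m a z k) (hkl : k ≤ l) : IsMWGIIndex m a z l := by
  obtain ⟨s, rfl⟩ := Nat.exists_eq_add_of_le hkl
  constructor
  · rw [add_right_comm, pow_add, ← mul_assoc, h.1, ← pow_add]
  · rw [pow_add, star_mul, mul_assoc, mul_assoc, ← mul_assoc _ _ z, h.2, ← mul_assoc]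

theorem IsMWGIIndex.mul_eq_zero_of_mul_eq_zero (hproper : ∀ x : R, star x * x = 0 → x = 0)
    (hm : m ≠ 0) (hz : a * z ^ 2 = z) (h : IsMWGIIndex m a z k) (hc : a * c = 0) :
    z * c = 0 := by
  have hsplit : a ^ (m + 1) * z * c = a ^ k * (a ^ (m + 1) * z ^ (k + 1) * c) := by
    rw [← mul_assoc, ← mul_assoc, pow_mul_comm, mul_assoc _ (a ^ k),
      pow_mul_pow_succ_of_mul_sq hz]
  have hvanish : a ^ (m + 1) * z * c = 0 := by
    rw [hsplit]
    apply mul_eq_zero_of_star_mul_mul_eq_zero hproper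
    rw [← hsplit, ← mul_assoc, ← mul_assoc, h.2, mul_assoc,
      pow_mul_eq_zero_of_mul_eq_zero hc hm, mul_zero]
  calc z * c = z ^ (m + 1) * a ^ (m + 1) * z * c := by
        rw [pow_mul_pow_mul_self_of_mul_sq hz h.1]
    _ = 0 := by rw [mul_assoc, mul_assoc, ← mul_assoc (a ^ _), hvanish, mul_zero]

theorem IsMWGIIndex.add (hx : IsMWGIIndex m a x k) (hy : IsMWGIIndex m b y k) (hk : k ≠ 0)
    (hm : m ≠ 0) (hab : a * b = 0) (hba : b * a = 0) (hsab : star a * b = 0)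
    (hxb : x * b = 0) (hya : y * a = 0) (hay : a * y = 0) (hbx : b * x = 0) :
    IsMWGIIndex m (a + b) (x + y) k := by
  have hsba : star b * a = 0 := by simpa using congrArg star hsab
  constructor
  · rw [add_pow_of_mul_eq_zero hab hba k.succ_ne_zero, add_pow_of_mul_eq_zero hab hba hk,
      add_mul, mul_add, mul_add, hx.1, hy.1, mul_pow_eq_zero_of_mul_eq_zero hxb k.succ_ne_zero,
      mul_pow_eq_zero_of_mul_eq_zero hya k.succ_ne_zero, add_zero, zero_add]
  · have hay' : star (a ^ k) * a ^ (m + 1) * y = 0 := by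
      rw [mul_assoc, pow_mul_eq_zero_of_mul_eq_zero hay m.succ_ne_zero, mul_zero]
    have hbx' : star (b ^ k) * b ^ (m + 1) * x = 0 := by
      rw [mul_assoc, pow_mul_eq_zero_of_mul_eq_zero hbx m.succ_ne_zero, mul_zero]
    rw [add_pow_of_mul_eq_zero hab hba hk, add_pow_of_mul_eq_zero hab hba hm,
      add_pow_of_mul_eq_zero hab hba m.succ_ne_zero, star_add]
    simp only [add_mul, mul_add, star_pow_mul_pow_eq_zero hsab hk m.succ_ne_zero,
      star_pow_mul_pow_eq_zero hsab hk hm, star_pow_mul_pow_eq_zero hsba hk m.succ_ne_zero,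
      star_pow_mul_pow_eq_zero hsba hk hm, hay', hbx', add_zero, zero_add]
    rw [hx.2, hy.2]

end MWGI

theorem mwgi_add {R : Type*} [Ring R] [StarRing R]
    (hproper : ∀ x : R, star x * x = 0 → x = 0)
    (m : ℕ) (hm : 0 < m) (a b x y : R)
    (hx : IsMWGI m a x) (hy : IsMWGI m b y)
    (hab : a * b = 0) (hba : b * a = 0) (hsab : star a * b = 0) :
    IsMWGI m (a + b) (x + y) := by
  rw [isMWGI_iff_exists_isMWGIIndex] at hx hy ⊢
  obtain ⟨hx₁, k₁, hxk⟩ := hx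
  obtain ⟨hy₁, k₂, hyk⟩ := hy
  have hxb : x * b = 0 := hxk.mul_eq_zero_of_mul_eq_zero hproper hm.ne' hx₁ hab
  have hya : y * a = 0 := hyk.mul_eq_zero_of_mul_eq_zero hproper hm.ne' hy₁ hba
  have hay : a * y = 0 := by rw [← hy₁, ← mul_assoc, hab, zero_mul]
  have hbx : b * x = 0 := by rw [← hx₁, ← mul_assoc, hba, zero_mul]
  exact ⟨add_mul_add_sq_of_mul_eq_zero hx₁ hy₁ hxb hya hay hbx, max k₁ k₂ + 1,
    (hxk.mono (by omega)).add (hyk.mono (by omega)) (by omega) hm.ne' hab hba hsab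
      hxb hya hay hbx⟩
end

section
/- Let R be a ring with proper involution, m a positive integer, let y be a core-EP inverse of a ∈ R, and let x ∈ R. Then x is an m-weak group inverse of a if and only if a x^2 = x and a x = y^m a^m. -/
section Monoid

variable {M : Type*} [Monoid M] {a x y : M}

theorem pow_mul_pow_succ_eq_of_mul_sq_eq (h : a * x ^ 2 = x) (n : ℕ) :
    a ^ n * x ^ (n + 1) = x := by
  induction n with
  | zero => simp
  | succ n ih =>
    calc a ^ (n + 1) * x ^ (n + 1 + 1) = a ^ n * (a * x ^ 2) * x ^ n := by
          rw [pow_succ, show n + 1 + 1 = 2 + n by omega, pow_add]; simp only [mul_assoc]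
      _ = x := by rw [h, mul_assoc, ← pow_succ', ih]

theorem pow_dvd_pow_mul_of_mul_sq_eq (h : a * x ^ 2 = x) (n j : ℕ) : a ^ n ∣ a ^ j * x :=
  ⟨a ^ j * x ^ (n + 1), by
    rw [← mul_assoc, pow_mul_comm, mul_assoc, pow_mul_pow_succ_eq_of_mul_sq_eq h]⟩

theorem pow_mul_pow_add_eq_of_pow_eq_mul {k : ℕ} (hy : a ^ k = y * a ^ (k + 1)) (i : ℕ) :
    y ^ i * a ^ (k + i) = a ^ k := by
  induction i with
  | zero => simp
  | succ i ih =>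
    rw [pow_succ, show k + (i + 1) = k + 1 + i by omega, pow_add, mul_assoc, ← mul_assoc y,
      ← hy, ← pow_add, ih]

theorem pow_mul_pow_mul_eq_of_pow_dvd {k : ℕ} (hy : a ^ k = y * a ^ (k + 1)) {z : M}
    (hz : a ^ k ∣ z) (i : ℕ) : y ^ i * a ^ i * z = z := by
  obtain ⟨w, rfl⟩ := hz
  rw [← mul_assoc, mul_assoc (y ^ i), ← pow_add, add_comm,
    pow_mul_pow_add_eq_of_pow_eq_mul hy]

theorem mul_mul_eq_of_mul_sq_eq_of_pow_eq_mul (hy₁ : a * y ^ 2 = y) {k : ℕ}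
    (hy₂ : a ^ k = y * a ^ (k + 1)) : y * a * y = y :=
  calc y * a * y = y * a * (a ^ k * y ^ (k + 1)) := by rw [pow_mul_pow_succ_eq_of_mul_sq_eq hy₁]
    _ = y * a ^ (k + 1) * y ^ (k + 1) := by rw [pow_succ' a k]; simp only [mul_assoc]
    _ = y := by rw [← hy₂, pow_mul_pow_succ_eq_of_mul_sq_eq hy₁]

theorem mul_mul_pow_eq_of_mul_sq_eq_of_pow_eq_mul (hy₁ : a * y ^ 2 = y) {k n : ℕ}
    (hy₂ : a ^ k = y * a ^ (k + 1)) (hkn : k ≤ n) : a * y * a ^ n = a ^ n := by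
  obtain ⟨j, rfl⟩ := Nat.exists_eq_add_of_le hkn
  have hk : a * y * a ^ k = a ^ k := by
    conv_lhs => rw [hy₂]
    rw [mul_assoc, ← mul_assoc y, ← sq, ← mul_assoc, hy₁, ← hy₂]
  rw [pow_add, ← mul_assoc, hk]

theorem pow_mul_eq_of_mul_eq {m : ℕ} (hm : 0 < m) (hy : a * y ^ 2 = y)
    (h : a * x = y ^ m * a ^ m) : a ^ m * x = y * a ^ m := by
  obtain ⟨m, rfl⟩ := Nat.exists_eq_add_one_of_ne_zero hm.ne'
  rw [pow_succ a m, mul_assoc, h, ← mul_assoc, pow_mul_pow_succ_eq_of_mul_sq_eq hy, pow_succ]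

end Monoid

theorem star_pow_mul_mul_eq {M : Type*} [Monoid M] [StarMul M] {a y : M}
    (hy₁ : a * y ^ 2 = y) (hy₂ : star (a * y) = a * y) {k n : ℕ}
    (hy₃ : a ^ k = y * a ^ (k + 1)) (hkn : k ≤ n) : star (a ^ n) * (a * y) = star (a ^ n) := by
  simpa only [star_mul, hy₂] using
    congrArg star (mul_mul_pow_eq_of_mul_sq_eq_of_pow_eq_mul hy₁ hy₃ hkn)

theorem eq_zero_of_star_mul_eq_zero_of_dvd {M : Type*} [MonoidWithZero M] [StarMul M]
    (hproper : ∀ x : M, star x * x = 0 → x = 0) {u v : M} (h : star u * v = 0) (hv : u ∣ v) :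
    v = 0 := by
  obtain ⟨w, rfl⟩ := hv
  exact hproper _ (by rw [star_mul, mul_assoc, h, mul_zero])

section Ring

variable {R : Type*} [Ring R] [StarRing R] {a x y : R} {m : ℕ}

theorem pow_succ_mul_eq_of_star_pow_mul_eq (hproper : ∀ x : R, star x * x = 0 → x = 0)
    (hx : a * x ^ 2 = x) (hy₁ : a * y ^ 2 = y) (hy₂ : star (a * y) = a * y) {k K : ℕ}
    (hy₃ : a ^ k = y * a ^ (k + 1)) (hK : star (a ^ K) * a ^ (m + 1) * x = star (a ^ K) * a ^ m) :
    a ^ (m + 1) * x = a * y * a ^ m := by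
  have hxK : star (a ^ (K + k)) * (a ^ (m + 1) * x) = star (a ^ (K + k)) * a ^ m := by
    simp only [pow_add a K k, star_mul, mul_assoc] at hK ⊢
    rw [hK]
  have hyK : star (a ^ (K + k)) * (a * y * a ^ m) = star (a ^ (K + k)) * a ^ m := by
    rw [← mul_assoc, star_pow_mul_mul_eq hy₁ hy₂ hy₃ (Nat.le_add_left k K)]
  have hdvd : a ^ (K + k) ∣ a ^ (m + 1) * x - a * y * a ^ m := by
    refine dvd_sub (pow_dvd_pow_mul_of_mul_sq_eq hx _ _) (Dvd.dvd.mul_right ?_ _)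
    simpa using pow_dvd_pow_mul_of_mul_sq_eq hy₁ (K + k) 1
  refine sub_eq_zero.mp (eq_zero_of_star_mul_eq_zero_of_dvd hproper ?_ hdvd)
  rw [mul_sub, hxK, hyK, sub_self]

theorem IsMWGI.mul_eq (hproper : ∀ x : R, star x * x = 0 → x = 0) (hm : 0 < m)
    (hy : IsCoreEP a y) (hx : IsMWGI m a x) : a * x = y ^ m * a ^ m := by
  obtain ⟨hy₁, hy₂, k, hy₃⟩ := hy
  obtain ⟨hx, K, -, hK⟩ := hx
  have hE := pow_succ_mul_eq_of_star_pow_mul_eq hproper hx hy₁ hy₂ hy₃ hK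
  have hax : a ^ k ∣ a * x := by simpa using pow_dvd_pow_mul_of_mul_sq_eq hx k 1
  have hyay : y ^ m * a * y = y ^ m := by
    obtain ⟨n, rfl⟩ := Nat.exists_eq_add_one_of_ne_zero hm.ne'
    rw [pow_succ, mul_assoc (y ^ n), mul_assoc (y ^ n),
      mul_mul_eq_of_mul_sq_eq_of_pow_eq_mul hy₁ hy₃]
  calc a * x = y ^ m * a ^ m * (a * x) := (pow_mul_pow_mul_eq_of_pow_dvd hy₃ hax m).symm
    _ = y ^ m * (a * y * a ^ m) := by rw [← hE, pow_succ]; simp only [mul_assoc]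
    _ = y ^ m * a ^ m := by rw [← mul_assoc, ← mul_assoc, hyay]

theorem isMWGI_of_mul_eq (hm : 0 < m) (hy : IsCoreEP a y) (hx : a * x ^ 2 = x)
    (h : a * x = y ^ m * a ^ m) : IsMWGI m a x := by
  obtain ⟨hy₁, hy₂, k, hy₃⟩ := hy
  have ham := pow_mul_eq_of_mul_eq hm hy₁ h
  have hx_eq : x = y ^ (m + 1) * a ^ m := by
    rw [← hx, sq, ← mul_assoc, h, mul_assoc, ham, ← mul_assoc, ← pow_succ]
  refine ⟨hx, k, ?_, ?_⟩
  · rw [hx_eq, mul_assoc, ← pow_add, show m + (k + 1) = k + (m + 1) by omega,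
      pow_mul_pow_add_eq_of_pow_eq_mul hy₃]
  · rw [mul_assoc, pow_succ', mul_assoc, ham, ← mul_assoc a, ← mul_assoc,
      star_pow_mul_mul_eq hy₁ hy₂ hy₃ le_rfl]

end Ring

theorem mwgi_iff_coreEP_eq {R : Type*} [Ring R] [StarRing R]
    (hproper : ∀ x : R, star x * x = 0 → x = 0)
    (m : ℕ) (hm : 0 < m) (a y x : R) (hy : IsCoreEP a y) :
    IsMWGI m a x ↔ (a * x ^ 2 = x ∧ a * x = y ^ m * a ^ m) :=
  ⟨fun hx => ⟨hx.1, hx.mul_eq hproper hm hy⟩, fun ⟨hx, h⟩ => isMWGI_of_mul_eq hm hy hx h⟩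
end
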